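/- arXiv:2212.04295 — 4 statements merged into one kernel-verified Lean document; each statement's English description precedes it below -/
import Mathlib

section
/- Let a > 0, let d ≥ 3, let μ ∈ ℝ, let P_0, …, P_d be real n×n matrices, and set P(μ) = Σ_{ℓ=0}^{d} P_ℓ τ_ℓ(μ). Assume P(μ) is invertible and let x̃(μ) be the unique solution of P(μ) x̃(μ) = b for b ∈ ℝ^n. Then the block linear system in the unknowns u_0, …, u_{d−1} ∈ ℝ^n given by: u_1 − (μ/a) u_0 = 0; u_{ℓ−1} − (2μ/a) u_ℓ + u_{ℓ+1} = 0 for ℓ = 1, …, d−2; and Σ_{ℓ=0}^{d−3} P_ℓ u_ℓ + (−P_d + P_{d−2}) u_{d−2} + P_{d−1} u_{d−1} + (2μ/a) P_d u_{d−1} = b, has a unique solution, namely u_ℓ = τ_ℓ(μ) x̃(μ) for ℓ = 0, …, d−1. -/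
open Matrix

/-- Chebyshev polynomials on the interval `[-a, a]`:
`τ₀(μ) = 1`, `τ₁(μ) = μ/a`, `τ_{ℓ+1}(μ) = (2μ/a) τ_ℓ(μ) − τ_{ℓ−1}(μ)`. -/
noncomputable def chebOn (a μ : ℝ) : ℕ → ℝ
  | 0 => 1
  | 1 => μ / a
  | (ℓ + 2) => 2 * (μ / a) * chebOn a μ (ℓ + 1) - chebOn a μ ℓ

lemma chebOn_add_two (a μ : ℝ) (ℓ : ℕ) :
    chebOn a μ (ℓ + 2) = 2 * (μ / a) * chebOn a μ (ℓ + 1) - chebOn a μ ℓ := rfl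

lemma sum_mulVec' {n : ℕ} (s : Finset ℕ) (A : ℕ → Matrix (Fin n) (Fin n) ℝ)
    (v : Fin n → ℝ) : (∑ ℓ ∈ s, A ℓ) *ᵥ v = ∑ ℓ ∈ s, A ℓ *ᵥ v := by
  classical
  induction s using Finset.induction with
  | empty => simp [Matrix.zero_mulVec]
  | insert _ _ h ih => simp [Finset.sum_insert h, Matrix.add_mulVec, ih]

lemma key_identity {n : ℕ} (a μ : ℝ) (m : ℕ) (P : ℕ → Matrix (Fin n) (Fin n) ℝ)
    (v : Fin n → ℝ) :
    (∑ ℓ ∈ Finset.range (m + 1), P ℓ *ᵥ (chebOn a μ ℓ • v))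
      + (-(P (m + 3)) + P (m + 1)) *ᵥ (chebOn a μ (m + 1) • v)
      + P (m + 2) *ᵥ (chebOn a μ (m + 2) • v)
      + (2 * μ / a) • (P (m + 3) *ᵥ (chebOn a μ (m + 2) • v))
    = (∑ ℓ ∈ Finset.range (m + 4), chebOn a μ ℓ • P ℓ) *ᵥ v := by
  rw [sum_mulVec']
  conv_rhs => rw [show m + 4 = (m + 3) + 1 from rfl, Finset.sum_range_succ,
    Finset.sum_range_succ, Finset.sum_range_succ]
  have hrec := chebOn_add_two a μ (m + 1)
  rw [show m + 1 + 2 = m + 3 from rfl, show m + 1 + 1 = m + 2 from rfl] at hrec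
  rw [hrec]
  simp only [Matrix.mulVec_smul, Matrix.add_mulVec, Matrix.neg_mulVec,
    Matrix.smul_mulVec]
  module

/-- The companion linearization of the interpolated system `P(μ) x̃(μ) = b` has the unique
solution `u_ℓ = τ_ℓ(μ) x̃(μ)`, `ℓ = 0, …, d−1`: stated as an equivalence between the block
equations of `(K − μM) u = b̃` and `u_ℓ = τ_ℓ(μ) x̃(μ)` for all `ℓ < d`. -/
theorem companion_linearization_unique_solution {n : ℕ} (a μ : ℝ) (ha : 0 < a)
    (d : ℕ) (hd : 3 ≤ d) (P : ℕ → Matrix (Fin n) (Fin n) ℝ) (b xt : Fin n → ℝ)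
    (hinv : IsUnit (∑ ℓ ∈ Finset.range (d + 1), chebOn a μ ℓ • P ℓ))
    (hsol : (∑ ℓ ∈ Finset.range (d + 1), chebOn a μ ℓ • P ℓ) *ᵥ xt = b)
    (u : ℕ → Fin n → ℝ) :
    (u 1 - (μ / a) • u 0 = 0 ∧
      (∀ ℓ, 1 ≤ ℓ → ℓ ≤ d - 2 → u (ℓ - 1) - (2 * μ / a) • u ℓ + u (ℓ + 1) = 0) ∧
      (∑ ℓ ∈ Finset.range (d - 2), P ℓ *ᵥ u ℓ) + (-(P d) + P (d - 2)) *ᵥ u (d - 2)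
        + P (d - 1) *ᵥ u (d - 1) + (2 * μ / a) • (P d *ᵥ u (d - 1)) = b)
    ↔ (∀ ℓ < d, u ℓ = chebOn a μ ℓ • xt) := by
  obtain ⟨m, rfl⟩ : ∃ m, d = m + 3 := ⟨d - 3, by omega⟩
  have h2 : m + 3 - 2 = m + 1 := by omega
  have h1 : m + 3 - 1 = m + 2 := by omega
  rw [h2, h1]
  constructor
  · rintro ⟨e1, e2, e3⟩
    -- all u ℓ, ℓ ≤ m+2, are determined by u 0
    have hpair : ∀ k, k + 1 ≤ m + 2 →
        u k = chebOn a μ k • u 0 ∧ u (k + 1) = chebOn a μ (k + 1) • u 0 := by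
      intro k
      induction k with
      | zero =>
        intro _
        constructor
        · show u 0 = (1 : ℝ) • u 0
          rw [one_smul]
        · have := e1
          have : u 1 = (μ / a) • u 0 := by
            have h := sub_eq_zero.mp e1
            exact h
          simpa [chebOn] using this
      | succ k ih =>
        intro hk
        obtain ⟨hk0, hk1⟩ := ih (by omega)
        refine ⟨hk1, ?_⟩
        have he := e2 (k + 1) (by omega) (by omega)
        rw [show k + 1 - 1 = k from rfl] at he
        have hC : u (k + 1 + 1) = (2 * μ / a) • u (k + 1) - u k := by
          have h := eq_neg_of_add_eq_zero_right he
          rw [h]; abel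
        rw [hC, hk0, hk1, show k + 1 + 1 = k + 2 from rfl, chebOn_add_two]
        module
    have hall : ∀ ℓ, ℓ ≤ m + 2 → u ℓ = chebOn a μ ℓ • u 0 := by
      intro ℓ hℓ
      rcases Nat.eq_zero_or_pos ℓ with h | h
      · subst h; exact (hpair 0 (by omega)).1
      · obtain ⟨k, rfl⟩ : ∃ k, ℓ = k + 1 := ⟨ℓ - 1, by omega⟩
        exact (hpair k (by omega)).2
    -- substitute into the last equation
    have e3' : (∑ ℓ ∈ Finset.range (m + 3 + 1), chebOn a μ ℓ • P ℓ) *ᵥ u 0 = b := by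
      rw [← key_identity a μ m P (u 0)]
      rw [← e3]
      congr 1
      · congr 1
        · congr 1
          · exact Finset.sum_congr rfl fun ℓ hℓ => by
              rw [hall ℓ (by have := Finset.mem_range.mp hℓ; omega)]
          · rw [hall (m + 1) (by omega)]
        · rw [hall (m + 2) (by omega)]
      · rw [hall (m + 2) (by omega)]
    have hu0 : u 0 = xt := by
      have hinj := Matrix.mulVec_injective_iff_isUnit.mpr hinv
      exact hinj (by rw [e3', hsol])
    intro ℓ hℓ
    rw [hall ℓ (by omega), hu0]
  · intro h
    refine ⟨?_, ?_, ?_⟩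
    · rw [h 0 (by omega), h 1 (by omega)]
      show chebOn a μ 1 • xt - (μ / a) • ((1 : ℝ) • xt) = 0
      rw [show chebOn a μ 1 = μ / a from rfl, one_smul, sub_self]
    · intro ℓ hℓ1 hℓ2
      obtain ⟨k, rfl⟩ : ∃ k, ℓ = k + 1 := ⟨ℓ - 1, by omega⟩
      rw [show k + 1 - 1 = k from rfl, h k (by omega), h (k + 1) (by omega),
        h (k + 1 + 1) (by omega), show k + 1 + 1 = k + 2 from rfl, chebOn_add_two]
      module
    · have := key_identity a μ m P xt
      rw [h (m + 1) (by omega), h (m + 2) (by omega)]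
      calc (∑ ℓ ∈ Finset.range (m + 1), P ℓ *ᵥ u ℓ)
            + (-(P (m + 3)) + P (m + 1)) *ᵥ (chebOn a μ (m + 1) • xt)
            + P (m + 2) *ᵥ (chebOn a μ (m + 2) • xt)
            + (2 * μ / a) • (P (m + 3) *ᵥ (chebOn a μ (m + 2) • xt))
          = (∑ ℓ ∈ Finset.range (m + 1), P ℓ *ᵥ (chebOn a μ ℓ • xt))
            + (-(P (m + 3)) + P (m + 1)) *ᵥ (chebOn a μ (m + 1) • xt)
            + P (m + 2) *ᵥ (chebOn a μ (m + 2) • xt)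
            + (2 * μ / a) • (P (m + 3) *ᵥ (chebOn a μ (m + 2) • xt)) := by
              congr 1
              congr 1
              congr 1
              exact Finset.sum_congr rfl fun ℓ hℓ => by
                rw [h ℓ (by have := Finset.mem_range.mp hℓ; omega)]
        _ = (∑ ℓ ∈ Finset.range (m + 4), chebOn a μ ℓ • P ℓ) *ᵥ xt :=
              key_identity a μ m P xt
        _ = b := by rw [show m + 4 = m + 3 + 1 from rfl] at *; exact hsol
end

section
/- Let a > 0, d ≥ 3, μ ∈ ℝ, and P_0, …, P_d real n×n matrices with P(μ) = Σ_{ℓ=0}^{d} P_ℓ τ_ℓ(μ) invertible. Then the dn×dn companion matrix K − μM of the linearization is invertible, where K − μM is the block matrix whose block rows encode the equations u_1 − (μ/a)u_0 = 0, u_{ℓ−1} − (2μ/a)u_ℓ + u_{ℓ+1} = 0 for ℓ = 1, …, d−2, and Σ_{ℓ=0}^{d−3} P_ℓ u_ℓ + (−P_d + P_{d−2}) u_{d−2} + (P_{d−1} + (2μ/a) P_d) u_{d−1} on the last block row. -/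
open Matrix

lemma sum_two_of {α : Type*} [Fintype α] [DecidableEq α] (f : α → ℝ) (q0 q1 : α)
    (h01 : q0 ≠ q1) (h : ∀ x, x ≠ q0 → x ≠ q1 → f x = 0) :
    ∑ x, f x = f q0 + f q1 := by
  rw [← Finset.sum_subset (Finset.subset_univ {q0, q1})
    (fun x _ hx => h x (fun e => hx (by simp [e])) (fun e => hx (by simp [e])))]
  rw [Finset.sum_pair h01]

lemma sum_three_of {α : Type*} [Fintype α] [DecidableEq α] (f : α → ℝ) (q0 q1 q2 : α)
    (h01 : q0 ≠ q1) (h02 : q0 ≠ q2) (h12 : q1 ≠ q2)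
    (h : ∀ x, x ≠ q0 → x ≠ q1 → x ≠ q2 → f x = 0) :
    ∑ x, f x = f q0 + f q1 + f q2 := by
  rw [← Finset.sum_subset (Finset.subset_univ {q0, q1, q2})
    (fun x _ hx => h x (fun e => hx (by simp [e])) (fun e => hx (by simp [e]))
      (fun e => hx (by simp [e])))]
  rw [Finset.sum_insert (by simp [h01, h02]), Finset.sum_pair h12, add_assoc]

lemma sum_delta_mul {n : ℕ} (c : ℝ) (r : Fin n) (f : Fin n → ℝ) :
    ∑ j, (c * (if r = j then (1:ℝ) else 0)) * f j = c * f r := by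
  simp [ite_mul, mul_ite, Finset.sum_ite_eq]

lemma sum_delta {n : ℕ} (r : Fin n) (f : Fin n → ℝ) :
    ∑ j, (if r = j then (1:ℝ) else 0) * f j = f r := by
  simp [ite_mul, Finset.sum_ite_eq]


/-- The `dn × dn` companion matrix `K − μM` of the Chebyshev companion linearization.
Block row `0` encodes `u₁ − (μ/a)u₀`; block row `i` for `1 ≤ i ≤ d−2` encodes
`u_{i−1} − (2μ/a)u_i + u_{i+1}`; and the last block row is
`[P₀, …, P_{d−3}, (−P_d + P_{d−2}), (P_{d−1} + (2μ/a)P_d)]`. -/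
noncomputable def companionKmuM (a μ : ℝ) (d n : ℕ)
    (P : ℕ → Matrix (Fin n) (Fin n) ℝ) :
    Matrix (Fin d × Fin n) (Fin d × Fin n) ℝ :=
  fun p q =>
    if (p.1 : ℕ) = d - 1 then
      -- last block row
      (if (q.1 : ℕ) + 3 ≤ d then P (q.1 : ℕ) p.2 q.2
       else if (q.1 : ℕ) = d - 2 then (-(P d) + P (d - 2)) p.2 q.2
       else (P (d - 1) + (2 * μ / a) • P d) p.2 q.2)
    else if (p.1 : ℕ) = 0 then
      -- first block row: [−(μ/a)I, I, 0, …, 0]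
      (if (q.1 : ℕ) = 0 then -(μ / a) * (if p.2 = q.2 then 1 else 0)
       else if (q.1 : ℕ) = 1 then (if p.2 = q.2 then 1 else 0)
       else 0)
    else
      -- block row i, 1 ≤ i ≤ d−2: […, I, −(2μ/a)I, I, …]
      (if (q.1 : ℕ) + 1 = (p.1 : ℕ) then (if p.2 = q.2 then 1 else 0)
       else if (q.1 : ℕ) = (p.1 : ℕ) then -(2 * μ / a) * (if p.2 = q.2 then 1 else 0)
       else if (q.1 : ℕ) = (p.1 : ℕ) + 1 then (if p.2 = q.2 then 1 else 0)
       else 0)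

/-- If `P(μ) = Σ_{ℓ=0}^{d} P_ℓ τ_ℓ(μ)` is invertible, then the `dn × dn` companion
matrix `K − μM` of the linearization is invertible. -/
theorem companion_matrix_isUnit {n : ℕ} (a μ : ℝ) (ha : 0 < a) (d : ℕ) (hd : 3 ≤ d)
    (P : ℕ → Matrix (Fin n) (Fin n) ℝ)
    (hinv : IsUnit (∑ ℓ ∈ Finset.range (d + 1), chebOn a μ ℓ • P ℓ)) :
    IsUnit (companionKmuM a μ d n P) := by
  classical
  rw [Matrix.isUnit_iff_isUnit_det, isUnit_iff_ne_zero, Ne,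
    ← Matrix.exists_mulVec_eq_zero_iff]
  rintro ⟨v, hv0, hMv⟩
  apply hv0
  have h0d : 0 < d := by omega
  have h1d : 1 < d := by omega
  have hrow : ∀ p, ∑ q : Fin d, ∑ j : Fin n,
      companionKmuM a μ d n P p (q, j) * v (q, j) = 0 := by
    intro p
    have h := congrFun hMv p
    simpa [Matrix.mulVec, dotProduct, Fintype.sum_prod_type] using h
  -- first block row
  have hrow0 : ∀ r : Fin n, v (⟨1, h1d⟩, r) = μ / a * v (⟨0, h0d⟩, r) := by
    intro r
    have h := hrow (⟨0, h0d⟩, r)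
    have hne : ¬ ((0:ℕ) = d - 1) := by omega
    simp only [companionKmuM, hne, if_false, if_true, ite_true, ite_false] at h
    rw [sum_two_of _ (⟨0, h0d⟩ : Fin d) (⟨1, h1d⟩ : Fin d)
      (by simp [Fin.ext_iff])
      (by
        intro x hx0 hx1
        have e0 : ¬ ((x : ℕ) = 0) := fun e => hx0 (Fin.ext e)
        have e1 : ¬ ((x : ℕ) = 1) := fun e => hx1 (Fin.ext e)
        simp [e0, e1])] at h
    simp only [show ((⟨0, h0d⟩ : Fin d) : ℕ) = 0 from rfl,
      show ((⟨1, h1d⟩ : Fin d) : ℕ) = 1 from rfl, if_true, ite_true, ite_false,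
      Nat.zero_ne_one, Nat.one_ne_zero, if_false] at h
    rw [sum_delta_mul, sum_delta] at h
    linarith
  -- middle block rows
  have hrowmid : ∀ k (h2 : k + 2 < d) (r : Fin n),
      v (⟨k + 2, h2⟩, r) = 2 * μ / a * v (⟨k + 1, by omega⟩, r) - v (⟨k, by omega⟩, r) := by
    intro k h2 r
    have h := hrow (⟨k + 1, by omega⟩, r)
    have hne : ¬ ((k + 1 : ℕ) = d - 1) := by omega
    have hne0 : ¬ ((k + 1 : ℕ) = 0) := by omega
    simp only [companionKmuM, hne, hne0, if_false] at h
    rw [sum_three_of _ (⟨k, by omega⟩ : Fin d) (⟨k + 1, by omega⟩ : Fin d) (⟨k + 2, h2⟩ : Fin d)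
      (by simp [Fin.ext_iff]) (by simp [Fin.ext_iff]) (by simp [Fin.ext_iff])
      (by
        intro x hx0 hx1 hx2
        have e0 : ¬ ((x : ℕ) + 1 = k + 1) := fun e => hx0 (Fin.ext (show (x:ℕ) = k by omega))
        have e1 : ¬ ((x : ℕ) = k + 1) := fun e => hx1 (Fin.ext e)
        have e2 : ¬ ((x : ℕ) = k + 1 + 1) := fun e => hx2 (Fin.ext (show (x:ℕ) = k + 2 by omega))
        simp [e0, e1, e2, show ¬ ((x:ℕ) = k) by omega])] at h
    simp only [show ((⟨k, by omega⟩ : Fin d) : ℕ) = k from rfl,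
      show ((⟨k + 1, by omega⟩ : Fin d) : ℕ) = k + 1 from rfl,
      show ((⟨k + 2, h2⟩ : Fin d) : ℕ) = k + 2 from rfl] at h
    have c0 : (k : ℕ) + 1 = k + 1 := rfl
    have c1 : ¬ ((k : ℕ) + 1 + 1 = k + 1) := by omega
    have c2 : ¬ ((k : ℕ) + 2 + 1 = k + 1) := by omega
    have c3 : ¬ ((k : ℕ) + 2 = k + 1) := by omega
    have c4 : (k : ℕ) + 2 = k + 1 + 1 := rfl
    simp only [c0, c1, c2, c3, c4, if_true, if_false, ite_true, ite_false] at h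
    rw [sum_delta, sum_delta_mul, sum_delta] at h
    linarith
  -- all blocks determined by block 0
  have key' : ∀ i (h : i < d) (r : Fin n),
      v (⟨i, h⟩, r) = chebOn a μ i * v (⟨0, h0d⟩, r) := by
    intro i
    induction i using Nat.strong_induction_on with
    | _ i ih =>
      match i with
      | 0 => intro h r; simp [chebOn]
      | 1 => intro h r; rw [hrow0 r]; simp [chebOn]
      | (k + 2) =>
        intro h r
        rw [hrowmid k h r, ih (k + 1) (by omega) (by omega) r, ih k (by omega) (by omega) r]
        show _ = chebOn a μ (k + 2) * _
        simp only [chebOn]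
        ring
  have key : ∀ (q : Fin d) (r : Fin n), v (q, r) = chebOn a μ (q : ℕ) * v (⟨0, h0d⟩, r) := by
    intro q r
    simpa using key' q.val q.isLt r
  -- last block row ⇒ P(μ) kills u0
  set u0 : Fin n → ℝ := fun j => v (⟨0, h0d⟩, j) with hu0
  have hcoef : ∀ (r j : Fin n),
      ∑ q : Fin d, chebOn a μ (q : ℕ) *
        (if (q : ℕ) + 3 ≤ d then P (q : ℕ) r j
         else if (q : ℕ) = d - 2 then (-(P d) + P (d - 2)) r j
         else (P (d - 1) + (2 * μ / a) • P d) r j)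
      = ∑ ℓ ∈ Finset.range (d + 1), chebOn a μ ℓ * P ℓ r j := by
    intro r j
    obtain ⟨e, rfl⟩ : ∃ e, d = e + 3 := ⟨d - 3, by omega⟩
    rw [Fin.sum_univ_eq_sum_range (fun q : ℕ => chebOn a μ q *
      (if q + 3 ≤ e + 3 then P q r j
       else if q = e + 3 - 2 then (-(P (e + 3)) + P (e + 3 - 2)) r j
       else (P (e + 3 - 1) + (2 * μ / a) • P (e + 3)) r j))]
    have hsub2 : e + 3 - 2 = e + 1 := rfl
    have hsub1 : e + 3 - 1 = e + 2 := rfl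
    rw [hsub2, hsub1]
    conv_lhs => rw [show e + 3 = (e + 1) + 2 from rfl, Finset.sum_range_succ,
      Finset.sum_range_succ]
    conv_rhs => rw [show e + 3 + 1 = (e + 1) + 3 from rfl, Finset.sum_range_succ,
      Finset.sum_range_succ, Finset.sum_range_succ]
    have hmain : ∀ q ∈ Finset.range (e + 1), chebOn a μ q *
        (if q + 3 ≤ e + 3 then P q r j
         else if q = e + 1 then (-(P (e + 3)) + P (e + 1)) r j
         else (P (e + 2) + (2 * μ / a) • P (e + 3)) r j) = chebOn a μ q * P q r j := by
      intro q hq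
      rw [Finset.mem_range] at hq
      rw [if_pos (by omega)]
    rw [Finset.sum_congr rfl hmain]
    have c1 : ¬ (e + 1 + 3 ≤ e + 3) := by omega
    have c2 : ¬ (e + 1 + 1 + 3 ≤ e + 3) := by omega
    have c3 : ¬ (e + 1 + 1 = e + 1) := by omega
    rw [if_neg c1, if_pos rfl, if_neg c2, if_neg c3]
    have hch : chebOn a μ (e + 3) = 2 * (μ / a) * chebOn a μ (e + 2) - chebOn a μ (e + 1) := by
      show chebOn a μ ((e + 1) + 2) = _
      simp [chebOn]
    have he1 : e + 1 + 1 = e + 2 := rfl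
    have he2 : e + 1 + 1 + 1 = e + 3 := rfl
    rw [he1, he2, hch]
    simp only [Matrix.add_apply, Matrix.neg_apply, Matrix.smul_apply, smul_eq_mul]
    ring
  have hAu : (∑ ℓ ∈ Finset.range (d + 1), chebOn a μ ℓ • P ℓ) *ᵥ u0 = 0 := by
    have hM : ∀ (r : Fin n) (q : Fin d) (j : Fin n),
        companionKmuM a μ d n P (⟨d - 1, by omega⟩, r) (q, j) =
          (if (q : ℕ) + 3 ≤ d then P (q : ℕ) r j
           else if (q : ℕ) = d - 2 then (-(P d) + P (d - 2)) r j
           else (P (d - 1) + (2 * μ / a) • P d) r j) := by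
      intro r q j
      simp only [companionKmuM]
      simp
    funext r
    have h := hrow (⟨d - 1, by omega⟩, r)
    simp only [hM] at h
    have h2 : ∑ j, (∑ q : Fin d, chebOn a μ (q : ℕ) *
        (if (q : ℕ) + 3 ≤ d then P (q : ℕ) r j
         else if (q : ℕ) = d - 2 then (-(P d) + P (d - 2)) r j
         else (P (d - 1) + (2 * μ / a) • P d) r j)) * u0 j = 0 := by
      calc ∑ j, (∑ q : Fin d, chebOn a μ (q : ℕ) *
          (if (q : ℕ) + 3 ≤ d then P (q : ℕ) r j
           else if (q : ℕ) = d - 2 then (-(P d) + P (d - 2)) r j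
           else (P (d - 1) + (2 * μ / a) • P d) r j)) * u0 j
          = ∑ j, ∑ q : Fin d, (chebOn a μ (q : ℕ) *
            (if (q : ℕ) + 3 ≤ d then P (q : ℕ) r j
             else if (q : ℕ) = d - 2 then (-(P d) + P (d - 2)) r j
             else (P (d - 1) + (2 * μ / a) • P d) r j)) * u0 j :=
          Finset.sum_congr rfl fun j _ => Finset.sum_mul _ _ _
        _ = ∑ q : Fin d, ∑ j, (chebOn a μ (q : ℕ) *
            (if (q : ℕ) + 3 ≤ d then P (q : ℕ) r j
             else if (q : ℕ) = d - 2 then (-(P d) + P (d - 2)) r j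
             else (P (d - 1) + (2 * μ / a) • P d) r j)) * u0 j := Finset.sum_comm
        _ = ∑ q : Fin d, ∑ j,
            (if (q : ℕ) + 3 ≤ d then P (q : ℕ) r j
             else if (q : ℕ) = d - 2 then (-(P d) + P (d - 2)) r j
             else (P (d - 1) + (2 * μ / a) • P d) r j) * v (q, j) :=
          Finset.sum_congr rfl fun q _ => Finset.sum_congr rfl fun j _ => by
            rw [key q j]; ring
        _ = 0 := h
    simp only [hcoef] at h2
    show (_ *ᵥ u0) r = (0 : Fin n → ℝ) r
    simp only [Matrix.mulVec, dotProduct, Matrix.sum_apply, Matrix.smul_apply,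
      smul_eq_mul, Pi.zero_apply]
    exact h2
  have hu0z : u0 = 0 := by
    by_contra hne
    have hdet := Matrix.exists_mulVec_eq_zero_iff.mp ⟨u0, hne, hAu⟩
    rw [Matrix.isUnit_iff_isUnit_det, hdet] at hinv
    simp at hinv
  funext p
  obtain ⟨q, r⟩ := p
  have := key q r
  rw [this]
  have : u0 r = 0 := by rw [hu0z]; rfl
  simp only [hu0] at this
  simp [this]
end

section
/- Let N ≥ 1 and i ≥ 1 with i + 1 ≤ N. Let V ∈ ℝ^{N×(i+1)} have linearly independent columns v_1, …, v_{i+1}, and let W ∈ ℝ^{N×i} have columns w_1, …, w_i satisfying the biorthogonality condition w_k^T v_l = δ_{kl} for all 1 ≤ k ≤ i, 1 ≤ l ≤ i. Suppose r and r̃ both lie in span{v_1, …, v_{i+1}}, that w_k^T r = 0 and w_k^T r̃ = 0 for all k = 1, …, i, and that r̃ ≠ 0. Then there exists ζ ∈ ℝ such that r = ζ r̃; that is, r and r̃ are colinear. -/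
open Matrix

lemma key_rep {N i : ℕ}
    (v : Fin (i + 1) → Fin N → ℝ) (w : Fin i → Fin N → ℝ)
    (hbi : ∀ k l : Fin i, w k ⬝ᵥ v (Fin.castSucc l) = if k = l then 1 else 0)
    (x : Fin N → ℝ)
    (hx : x ∈ Submodule.span ℝ (Set.range v))
    (hxo : ∀ k : Fin i, w k ⬝ᵥ x = 0) :
    ∃ c : ℝ, x = c • (v (Fin.last i) - ∑ k : Fin i, (w k ⬝ᵥ v (Fin.last i)) • v (Fin.castSucc k)) := by
  obtain ⟨c, hc⟩ := (Submodule.mem_span_range_iff_exists_fun ℝ).mp hx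
  refine ⟨c (Fin.last i), ?_⟩
  have hdot : ∀ k : Fin i, w k ⬝ᵥ x =
      c (Fin.castSucc k) + c (Fin.last i) * (w k ⬝ᵥ v (Fin.last i)) := by
    intro k
    rw [← hc]
    have : w k ⬝ᵥ (∑ l : Fin (i+1), c l • v l) = ∑ l : Fin (i+1), c l * (w k ⬝ᵥ v l) := by
      simp only [dotProduct, Finset.sum_apply, Pi.smul_apply, smul_eq_mul, Finset.mul_sum]
      rw [Finset.sum_comm]
      refine Finset.sum_congr rfl fun l _ => ?_
      exact Finset.sum_congr rfl fun j _ => by ring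
    rw [this, Fin.sum_univ_castSucc]
    simp [hbi, mul_comm]
  have hck : ∀ k : Fin i, c (Fin.castSucc k) = -(c (Fin.last i) * (w k ⬝ᵥ v (Fin.last i))) := by
    intro k
    have := hdot k
    rw [hxo k] at this
    linarith
  rw [← hc, Fin.sum_univ_castSucc]
  rw [smul_sub, Finset.smul_sum]
  have : ∀ k : Fin i, c (Fin.castSucc k) • v (Fin.castSucc k)
      = -((c (Fin.last i) • (w k ⬝ᵥ v (Fin.last i)) • v (Fin.castSucc k))) := by
    intro k
    rw [hck k, smul_smul]
    simp
  simp only [this]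
  rw [Finset.sum_neg_distrib]
  ring_nf

/-- If `r` and `r̃` both lie in the span of linearly independent vectors `v₁, …, v_{i+1}`,
are orthogonal to vectors `w₁, …, w_i` that are biorthogonal to `v₁, …, v_i`
(`wₖᵀ vₗ = δ_{kl}`), and `r̃ ≠ 0`, then `r` and `r̃` are colinear. -/
theorem residuals_colinear {N i : ℕ} (hN : 1 ≤ N) (hi : 1 ≤ i) (hiN : i + 1 ≤ N)
    (v : Fin (i + 1) → Fin N → ℝ) (w : Fin i → Fin N → ℝ)
    (hli : LinearIndependent ℝ v)
    (hbi : ∀ k l : Fin i, w k ⬝ᵥ v (Fin.castSucc l) = if k = l then 1 else 0)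
    (r rt : Fin N → ℝ)
    (hr : r ∈ Submodule.span ℝ (Set.range v))
    (hrt : rt ∈ Submodule.span ℝ (Set.range v))
    (hro : ∀ k : Fin i, w k ⬝ᵥ r = 0)
    (hrto : ∀ k : Fin i, w k ⬝ᵥ rt = 0)
    (hne : rt ≠ 0) :
    ∃ ζ : ℝ, r = ζ • rt := by
  obtain ⟨c, hc⟩ := key_rep v w hbi r hr hro
  obtain ⟨d, hd⟩ := key_rep v w hbi rt hrt hrto
  have hdne : d ≠ 0 := by
    rintro rfl
    simp at hd
    exact hne hd
  refine ⟨c / d, ?_⟩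
  rw [hc, hd, smul_smul]
  field_simp
end

section
/- Let K, M be real N×N matrices, μ, σ, β ∈ ℝ, j ≥ 1, and let Ẑ, V, P be real N×j matrices, v_{j+1} ∈ ℝ^N, β̂_j ∈ ℝ, and T̂ a real j×j matrix. Assume: (i) (K − σM) Ẑ = V + P; (ii) the shifted Lanczos relation V + (σ − μ) M Ẑ = V (I_j + (σ − μ) T̂) + (σ − μ) β̂_j v_{j+1} e_j^T holds, where e_j is the j-th standard basis vector of ℝ^j; (iii) I_j + (σ − μ) T̂ is invertible and y = (I_j + (σ − μ) T̂)^{-1} (β e_1); (iv) b̃ = β V e_1. Then b̃ − (K − μM) Ẑ y = (μ − σ) β̂_j (e_j^T y) v_{j+1} − P y; that is, the residual of the inexact method equals the exact residual minus P y. -/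
open Matrix

/-- The residual of the inexact method equals the exact residual minus `P y`:
`b̃ − (K − μM) Ẑ y = (μ − σ) β̂_j (e_jᵀ y) v_{j+1} − P y`, given the inexact relation
`(K − σM) Ẑ = V + P`, the shifted Lanczos relation, the small solve
`(I + (σ−μ)T̂) y = β e₁`, and `b̃ = β V e₁`. -/
theorem inexact_residual_eq_exact_sub_Py {N j : ℕ} (hj : 1 ≤ j)
    (K M : Matrix (Fin N) (Fin N) ℝ) (μ σ β βhat : ℝ)
    (Zhat V P : Matrix (Fin N) (Fin j) ℝ)
    (vj1 : Fin N → ℝ) (That : Matrix (Fin j) (Fin j) ℝ)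
    (y : Fin j → ℝ) (btilde : Fin N → ℝ)
    (h1 : (K - σ • M) * Zhat = V + P)
    (h2 : V + (σ - μ) • (M * Zhat) =
      V * (1 + (σ - μ) • That)
        + ((σ - μ) * βhat) • vecMulVec vj1 ((Pi.single (⟨j - 1, by omega⟩ : Fin j) 1 : Fin j → ℝ)))
    (h3 : IsUnit (1 + (σ - μ) • That))
    (hy : (1 + (σ - μ) • That) *ᵥ y = β • (Pi.single (⟨0, by omega⟩ : Fin j) 1 : Fin j → ℝ))
    (hb : btilde = β • (V *ᵥ (Pi.single (⟨0, by omega⟩ : Fin j) 1 : Fin j → ℝ))) :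
    btilde - (K - μ • M) *ᵥ (Zhat *ᵥ y) =
      ((μ - σ) * βhat * y ⟨j - 1, by omega⟩) • vj1 - P *ᵥ y := by
  have hsplit : (K - μ • M) * Zhat
      = (V + (σ - μ) • (M * Zhat)) + P := by
    have h : K - μ • M = (K - σ • M) + (σ - μ) • M := by module
    rw [h, Matrix.add_mul, h1, Matrix.smul_mul]
    abel
  have hvv : (vecMulVec vj1 ((Pi.single (⟨j - 1, by omega⟩ : Fin j) 1 : Fin j → ℝ))) *ᵥ y
      = y ⟨j - 1, by omega⟩ • vj1 := by
    funext i
    simp [vecMulVec, mulVec, dotProduct, mul_comm, Pi.single_apply]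
  have key : (K - μ • M) *ᵥ (Zhat *ᵥ y)
      = btilde + ((σ - μ) * βhat * y ⟨j - 1, by omega⟩) • vj1 + P *ᵥ y := by
    rw [mulVec_mulVec, hsplit, Matrix.add_mulVec, h2, Matrix.add_mulVec, ← mulVec_mulVec, hy,
      mulVec_smul, smul_mulVec, hvv, hb, smul_smul]
  rw [key]
  have : (μ - σ) * βhat * y ⟨j - 1, by omega⟩ = -((σ - μ) * βhat * y ⟨j - 1, by omega⟩) := by ring
  rw [this]
  module
end
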